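/- With Q the star-shaped plumbing intersection matrix described in the context, assume D := e_0 · p_1⋯p_ν + Σ_{l=1}^{ν} q_l ∏_{l'≠l} p_{l'} is nonzero, so that Q is invertible over ℚ. Let v^K ∈ ℚ^V be the vector with v^K(c) = −e_0 − 2 and v^K((l,i)) = k^l_i − 2, and let w = Q^{−1} v^K. Then D · w(c) = −(e_0 + 2) · p_1⋯p_ν + Σ_{l=1}^{ν} (p_l − q_l − 1) ∏_{l'≠l} p_{l'}. (In the paper's notation, w(c) is the coefficient m_{v_c}(K) of the canonical class at the central node, and this identity is equivalent to m_{v_c}(K) = −N_Y − 1.) -/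

import Mathlib

/-- The index set `V = {c} ∪ {(l,i) : 1 ≤ l ≤ ν, 1 ≤ i ≤ s l}` of the star-shaped
plumbing graph: `none` is the central node `c`, and `some ⟨l, i⟩` is the node on the
`(l+1)`-st arm in position `i+1`. -/
abbrev PlumbV (ν : ℕ) (s : ℕ → ℕ) : Type :=
  Option ((l : Fin ν) × Fin (s (l.val + 1)))

/-- The intersection matrix `Q` of the star-shaped plumbing graph. -/
def plumbQ (ν : ℕ) (s : ℕ → ℕ) (e₀ : ℤ) (k : ℕ → ℕ → ℤ) :
    Matrix (PlumbV ν s) (PlumbV ν s) ℤ :=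
  Matrix.of fun v w =>
    match v, w with
    | none, none => e₀
    | none, some li => if (li.2 : ℕ) = 0 then 1 else 0
    | some li, none => if (li.2 : ℕ) = 0 then 1 else 0
    | some li, some li' =>
        if li.1 = li'.1 then
          (if (li.2 : ℕ) = (li'.2 : ℕ) then -k (li.1.val + 1) ((li.2 : ℕ) + 1)
           else if (li.2 : ℕ) + 1 = (li'.2 : ℕ) ∨ (li'.2 : ℕ) + 1 = (li.2 : ℕ) then 1
           else 0)
        else 0

/-- The vector `v^K` with `v^K(c) = -e₀ - 2` and `v^K((l,i)) = k l i - 2` whose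
solution `w` of `Q w = v^K` is the canonical class of the plumbing graph. -/
noncomputable def plumbVK (ν : ℕ) (s : ℕ → ℕ) (e₀ : ℤ) (k : ℕ → ℕ → ℤ) :
    PlumbV ν s → ℚ :=
  fun v =>
    match v with
    | none => -(e₀ : ℚ) - 2
    | some li => (k (li.1.val + 1) (li.2.val + 1) : ℚ) - 2

open Finset

lemma tele (n : ℕ) (pc kc : ℕ → ℤ)
    (h1 : pc (n+1) = 1) (h2 : pc (n+2) = 0)
    (hr : ∀ m, 1 ≤ m → m ≤ n → pc m = kc m * pc (m+1) - pc (m+2)) :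
    ∑ i ∈ range n, pc (i+2) * (kc (i+1) - 2) = pc 1 - pc 2 - 1 := by
  have hc : ∀ i ∈ range n, pc (i+2) * (kc (i+1) - 2)
      = (fun i => pc (i+1) - pc (i+2)) i - (fun i => pc (i+1) - pc (i+2)) (i+1) := by
    intro i hi
    have h := hr (i+1) (by omega) (by have := mem_range.mp hi; omega)
    have e1 : i+1+1 = i+2 := by omega
    have e2 : i+1+2 = i+3 := by omega
    rw [e1, e2] at h
    simp only []
    rw [e1, e2]
    linarith
  rw [Finset.sum_congr rfl hc, Finset.sum_range_sub']
  simp only [h1, h2]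
  ring

lemma rowArm (n : ℕ) (pc kc : ℕ → ℤ)
    (h1 : pc (n+1) = 1) (h2 : pc (n+2) = 0)
    (hr : ∀ m, 1 ≤ m → m ≤ n → pc m = kc m * pc (m+1) - pc (m+2))
    (j : ℕ) (hj : j < n) :
    (if j = 0 then pc 1 else 0)
      + ∑ i ∈ range n, pc (i+2) *
          (if i = j then -kc (i+1) else if i+1 = j ∨ j+1 = i then 1 else 0) = 0 := by
  have split : ∀ i ∈ range n, pc (i+2) *
          (if i = j then -kc (i+1) else if i+1 = j ∨ j+1 = i then 1 else 0)
      = ((if i = j then -(kc (j+1)) * pc (j+2) else 0)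
        + (if i = j+1 then pc (j+3) else 0))
        + (if j = 0 then 0 else if i = j-1 then pc (j+1) else 0) := by
    intro i _
    by_cases h0 : i = j
    · subst h0
      rw [if_pos (rfl : i = i), if_pos (rfl : i = i), if_neg (show ¬ i = i+1 by omega)]
      by_cases hz : i = 0
      · rw [if_pos hz]; ring
      · rw [if_neg hz, if_neg (show ¬ i = i-1 by omega)]; ring
    · rw [if_neg h0, if_neg h0]
      by_cases h1' : i = j + 1
      · subst h1'
        rw [if_pos (show j+1+1 = j ∨ j+1 = j+1 from Or.inr rfl), if_pos (rfl : j+1 = j+1)]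
        rw [show j+1+2 = j+3 by omega]
        by_cases hz : j = 0
        · rw [if_pos hz]; ring
        · rw [if_neg hz, if_neg (show ¬ j+1 = j-1 by omega)]; ring
      · rw [if_neg h1']
        by_cases h2' : i + 1 = j
        · rw [if_pos (Or.inl h2'), if_neg (show ¬ j = 0 by omega),
            if_pos (show i = j - 1 by omega), show i+2 = j+1 by omega]
          ring
        · rw [if_neg (show ¬ (i+1 = j ∨ j+1 = i) by omega)]
          by_cases hz : j = 0
          · rw [if_pos hz]; ring
          · rw [if_neg hz, if_neg (show ¬ i = j - 1 by omega)]; ring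
  rw [Finset.sum_congr rfl split]
  rw [Finset.sum_add_distrib, Finset.sum_add_distrib]
  rw [Finset.sum_ite_eq' (range n) j, Finset.sum_ite_eq' (range n) (j+1)]
  have h3 : (∑ i ∈ range n, if j = 0 then (0:ℤ) else if i = j-1 then pc (j+1) else 0)
      = if j = 0 then 0 else pc (j+1) := by
    by_cases hz : j = 0
    · simp [hz]
    · simp only [if_neg hz]
      rw [Finset.sum_ite_eq' (range n) (j-1)]
      rw [if_pos (mem_range.mpr (by omega))]
  rw [h3, if_pos (mem_range.mpr hj)]
  have h4 : (if j + 1 ∈ range n then pc (j+3) else 0) = pc (j+3) := by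
    by_cases hc : j + 1 ∈ range n
    · rw [if_pos hc]
    · rw [if_neg hc]
      simp only [mem_range] at hc
      rw [show j+3 = n+2 by omega, h2]
  rw [h4]
  have h := hr (j+1) (by omega) (by omega)
  rw [show j+1+1 = j+2 by omega, show j+1+2 = j+3 by omega] at h
  by_cases hz : j = 0
  · subst hz
    simp only [if_pos rfl]
    norm_num at h ⊢
    linarith
  · simp only [if_neg hz]
    linarith

lemma sumIcc (ν : ℕ) (f : ℕ → ℚ) : ∑ l ∈ Icc 1 ν, f l = ∑ l : Fin ν, f (l.val+1) := by
  rw [Fin.sum_univ_eq_sum_range (fun l => f (l+1)) ν]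
  rw [show Icc 1 ν = Ico 1 (ν+1) by rw [Finset.Ico_add_one_right_eq_Icc], Finset.sum_Ico_eq_sum_range]
  simp [add_comm]

lemma sum_plumbV (ν : ℕ) (s : ℕ → ℕ) (f : PlumbV ν s → ℚ) :
    ∑ v, f v = f none + ∑ l : Fin ν, ∑ i : Fin (s (l.val+1)), f (some ⟨l, i⟩) := by
  rw [Fintype.sum_option]
  congr 1
  rw [← Finset.univ_sigma_univ, Finset.sum_sigma]

lemma castIte (c : Prop) [Decidable c] (a b : ℤ) :
    ((if c then a else b : ℤ) : ℚ) = if c then (a : ℚ) else (b : ℚ) := by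
  split_ifs <;> rfl

lemma rowArmQ (n : ℕ) (pc kc : ℕ → ℤ)
    (h1 : pc (n+1) = 1) (h2 : pc (n+2) = 0)
    (hr : ∀ m, 1 ≤ m → m ≤ n → pc m = kc m * pc (m+1) - pc (m+2))
    (j : ℕ) (hj : j < n) :
    (if j = 0 then ((pc 1 : ℤ) : ℚ) else 0)
      + ∑ i ∈ range n, ((pc (i+2) : ℤ) : ℚ) *
          (if i = j then -((kc (i+1) : ℤ) : ℚ) else if i+1 = j ∨ j+1 = i then 1 else 0) = 0 := by
  have h := rowArm n pc kc h1 h2 hr j hj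
  have h' : ((((if j = 0 then pc 1 else 0)
      + ∑ i ∈ range n, pc (i+2) *
          (if i = j then -kc (i+1) else if i+1 = j ∨ j+1 = i then 1 else 0)) : ℤ) : ℚ) = 0 := by
    rw [h]; norm_num
  push_cast [castIte] at h'
  convert h' using 2

lemma teleQ (n : ℕ) (pc kc : ℕ → ℤ)
    (h1 : pc (n+1) = 1) (h2 : pc (n+2) = 0)
    (hr : ∀ m, 1 ≤ m → m ≤ n → pc m = kc m * pc (m+1) - pc (m+2)) :
    ∑ i ∈ range n, ((pc (i+2) : ℤ) : ℚ) * (((kc (i+1) : ℤ) : ℚ) - 2)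
      = ((pc 1 : ℤ) : ℚ) - ((pc 2 : ℤ) : ℚ) - 1 := by
  have h := tele n pc kc h1 h2 hr
  have h' : ((∑ i ∈ range n, pc (i+2) * (kc (i+1) - 2) : ℤ) : ℚ)
      = ((pc 1 - pc 2 - 1 : ℤ) : ℚ) := by rw [h]
  push_cast at h'
  convert h' using 2

/-- The cofactor-like row vector `u` with `u(c) = p₁⋯p_ν` and
`u((l,i)) = p^l_{i+1} ∏_{l'≠l} p_{l'}`. -/
noncomputable def uFun (ν : ℕ) (s : ℕ → ℕ) (p : ℕ → ℕ → ℤ) : PlumbV ν s → ℚ :=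
  fun v => v.elim (∏ l ∈ Finset.Icc 1 ν, ((p l 1 : ℤ) : ℚ))
    (fun li => ((p (li.1.val + 1) (li.2.val + 2) : ℤ) : ℚ)
      * ∏ l' ∈ (Finset.Icc 1 ν).erase (li.1.val + 1), ((p l' 1 : ℤ) : ℚ))

@[simp] lemma uFun_none (ν s p) : uFun ν s p none = ∏ l ∈ Finset.Icc 1 ν, ((p l 1 : ℤ) : ℚ) := rfl

@[simp] lemma uFun_some (ν s p) (li : (l : Fin ν) × Fin (s (l.val + 1))) :
    uFun ν s p (some li) = ((p (li.1.val + 1) (li.2.val + 2) : ℤ) : ℚ)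
      * ∏ l' ∈ (Finset.Icc 1 ν).erase (li.1.val + 1), ((p l' 1 : ℤ) : ℚ) := rfl

lemma row_eq (ν : ℕ) (s : ℕ → ℕ)
    (hs : ∀ l, 1 ≤ l → l ≤ ν → 1 ≤ s l)
    (e₀ : ℤ) (k : ℕ → ℕ → ℤ) (p : ℕ → ℕ → ℤ)
    (hp2 : ∀ l, 1 ≤ l → l ≤ ν → p l (s l + 2) = 0)
    (hp1 : ∀ l, 1 ≤ l → l ≤ ν → p l (s l + 1) = 1)
    (hrec : ∀ l i, 1 ≤ l → l ≤ ν → 1 ≤ i → i ≤ s l →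
      p l i = k l i * p l (i + 1) - p l (i + 2))
    (v' : PlumbV ν s) :
    ∑ v, uFun ν s p v * ((plumbQ ν s e₀ k).map (fun z : ℤ => (z : ℚ))) v v'
      = if v' = none then
          ((e₀ * ∏ l ∈ Finset.Icc 1 ν, p l 1
            + ∑ l ∈ Finset.Icc 1 ν, p l 2 * ∏ l' ∈ (Finset.Icc 1 ν).erase l, p l' 1 : ℤ) : ℚ)
        else 0 := by
  classical
  rw [sum_plumbV]
  rcases v' with _ | ⟨l', j⟩
  · -- central column
    rw [if_pos rfl]
    have hin : ∀ l : Fin ν, ∑ i : Fin (s (l.val + 1)),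
        uFun ν s p (some ⟨l, i⟩)
          * ((plumbQ ν s e₀ k).map (fun z : ℤ => (z : ℚ))) (some ⟨l, i⟩) none
        = ((p (l.val + 1) 2 : ℤ) : ℚ)
            * ∏ l' ∈ (Finset.Icc 1 ν).erase (l.val + 1), ((p l' 1 : ℤ) : ℚ) := by
      intro l
      have hn : 1 ≤ s (l.val + 1) := hs _ (by omega) (by have := l.isLt; omega)
      have hcongr : ∀ i : Fin (s (l.val + 1)),
          uFun ν s p (some ⟨l, i⟩)
            * ((plumbQ ν s e₀ k).map (fun z : ℤ => (z : ℚ))) (some ⟨l, i⟩) none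
          = (fun m => if m = 0 then ((p (l.val + 1) (m + 2) : ℤ) : ℚ)
              * ∏ l' ∈ (Finset.Icc 1 ν).erase (l.val + 1), ((p l' 1 : ℤ) : ℚ) else 0) i.val := by
        intro i
        rw [uFun_some]
        show _ * ((if (i : ℕ) = 0 then (1:ℤ) else 0 : ℤ) : ℚ) = _
        rw [castIte]
        by_cases hz : (i : ℕ) = 0 <;> simp [hz]
      have hsum : (∑ i : Fin (s (l.val + 1)),
          uFun ν s p (some ⟨l, i⟩)
            * ((plumbQ ν s e₀ k).map (fun z : ℤ => (z : ℚ))) (some ⟨l, i⟩) none)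
          = ∑ m ∈ range (s (l.val + 1)),
              (fun m => if m = 0 then ((p (l.val + 1) (m + 2) : ℤ) : ℚ)
              * ∏ l' ∈ (Finset.Icc 1 ν).erase (l.val + 1), ((p l' 1 : ℤ) : ℚ) else 0) m := by
        rw [Finset.sum_congr rfl (fun i _ => hcongr i)]
        exact Fin.sum_univ_eq_sum_range (fun m => if m = 0 then ((p (l.val + 1) (m + 2) : ℤ) : ℚ)
              * ∏ l' ∈ (Finset.Icc 1 ν).erase (l.val + 1), ((p l' 1 : ℤ) : ℚ) else 0) (s (l.val + 1))
      rw [hsum]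
      simp only []
      rw [Finset.sum_ite_eq' (range (s (l.val + 1))) 0, if_pos (mem_range.mpr (by omega))]
    rw [Finset.sum_congr rfl (fun l _ => hin l)]
    show (∏ l ∈ Finset.Icc 1 ν, ((p l 1 : ℤ) : ℚ)) * ((e₀ : ℤ) : ℚ) + _ = _
    push_cast
    rw [sumIcc ν (fun L => (p L 2 : ℚ) * ∏ l' ∈ (Finset.Icc 1 ν).erase L, ((p l' 1 : ℤ) : ℚ))]
    push_cast
    ring
  · -- arm column
    rw [if_neg (by simp)]
    have hL1 : 1 ≤ l'.val + 1 := by omega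
    have hL2 : l'.val + 1 ≤ ν := by have := l'.isLt; omega
    have hn : 1 ≤ s (l'.val + 1) := hs _ hL1 hL2
    have hzero : ∀ l : Fin ν, l ≠ l' → ∑ i : Fin (s (l.val + 1)),
        uFun ν s p (some ⟨l, i⟩)
          * ((plumbQ ν s e₀ k).map (fun z : ℤ => (z : ℚ))) (some ⟨l, i⟩) (some ⟨l', j⟩) = 0 := by
      intro l hl
      apply Finset.sum_eq_zero
      intro i _
      show _ * ((if l = l' then _ else 0 : ℤ) : ℚ) = 0
      rw [if_neg hl]
      simp
    rw [Finset.sum_eq_single l' (fun l _ hl => hzero l hl) (by simp)]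
    have hcongr : ∀ i : Fin (s (l'.val + 1)),
        uFun ν s p (some ⟨l', i⟩)
          * ((plumbQ ν s e₀ k).map (fun z : ℤ => (z : ℚ))) (some ⟨l', i⟩) (some ⟨l', j⟩)
        = (fun m => (((p (l'.val + 1) (m + 2) : ℤ)) : ℚ) *
              (if m = (j : ℕ) then -((k (l'.val + 1) (m + 1) : ℤ) : ℚ)
               else if m + 1 = (j : ℕ) ∨ (j : ℕ) + 1 = m then 1 else 0)
            * ∏ l'' ∈ (Finset.Icc 1 ν).erase (l'.val + 1), ((p l'' 1 : ℤ) : ℚ)) i.val := by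
      intro i
      rw [uFun_some]
      show _ * ((if l' = l' then
          (if (i : ℕ) = (j : ℕ) then -k (l'.val + 1) ((i : ℕ) + 1)
           else if (i : ℕ) + 1 = (j : ℕ) ∨ (j : ℕ) + 1 = (i : ℕ) then 1 else 0)
          else 0 : ℤ) : ℚ) = _
      rw [if_pos rfl, castIte, castIte]
      push_cast
      ring
    have hsum : (∑ i : Fin (s (l'.val + 1)),
        uFun ν s p (some ⟨l', i⟩)
          * ((plumbQ ν s e₀ k).map (fun z : ℤ => (z : ℚ))) (some ⟨l', i⟩) (some ⟨l', j⟩))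
        = ∑ m ∈ range (s (l'.val + 1)),
            (((p (l'.val + 1) (m + 2) : ℤ)) : ℚ) *
              (if m = (j : ℕ) then -((k (l'.val + 1) (m + 1) : ℤ) : ℚ)
               else if m + 1 = (j : ℕ) ∨ (j : ℕ) + 1 = m then 1 else 0)
            * ∏ l'' ∈ (Finset.Icc 1 ν).erase (l'.val + 1), ((p l'' 1 : ℤ) : ℚ) := by
      rw [Finset.sum_congr rfl (fun i _ => hcongr i)]
      exact Fin.sum_univ_eq_sum_range (fun m => (((p (l'.val + 1) (m + 2) : ℤ)) : ℚ) *
              (if m = (j : ℕ) then -((k (l'.val + 1) (m + 1) : ℤ) : ℚ)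
               else if m + 1 = (j : ℕ) ∨ (j : ℕ) + 1 = m then 1 else 0)
            * ∏ l'' ∈ (Finset.Icc 1 ν).erase (l'.val + 1), ((p l'' 1 : ℤ) : ℚ)) (s (l'.val + 1))
    rw [hsum, ← Finset.sum_mul]
    show (∏ l ∈ Finset.Icc 1 ν, ((p l 1 : ℤ) : ℚ))
        * ((if (j : ℕ) = 0 then (1:ℤ) else 0 : ℤ) : ℚ) + _ = 0
    rw [castIte]
    have hfac : (∏ l ∈ Finset.Icc 1 ν, ((p l 1 : ℤ) : ℚ))
        = ((p (l'.val + 1) 1 : ℤ) : ℚ)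
          * ∏ l'' ∈ (Finset.Icc 1 ν).erase (l'.val + 1), ((p l'' 1 : ℤ) : ℚ) := by
      rw [← Finset.prod_erase_mul _ _ (Finset.mem_Icc.mpr ⟨hL1, hL2⟩)]
      ring
    rw [hfac]
    have key := rowArmQ (s (l'.val + 1)) (p (l'.val + 1)) (k (l'.val + 1))
      (hp1 _ hL1 hL2) (hp2 _ hL1 hL2) (fun m hm1 hm2 => hrec _ m hL1 hL2 hm1 hm2)
      (j : ℕ) j.isLt
    calc ((p (l'.val + 1) 1 : ℤ) : ℚ)
          * (∏ l'' ∈ (Finset.Icc 1 ν).erase (l'.val + 1), ((p l'' 1 : ℤ) : ℚ))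
          * (if (j : ℕ) = 0 then ((1:ℤ) : ℚ) else ((0:ℤ) : ℚ))
        + (∑ m ∈ range (s (l'.val + 1)), ((p (l'.val + 1) (m + 2) : ℤ) : ℚ) *
              (if m = (j : ℕ) then -((k (l'.val + 1) (m + 1) : ℤ) : ℚ)
               else if m + 1 = (j : ℕ) ∨ (j : ℕ) + 1 = m then 1 else 0))
            * ∏ l'' ∈ (Finset.Icc 1 ν).erase (l'.val + 1), ((p l'' 1 : ℤ) : ℚ)
        = ((if (j : ℕ) = 0 then ((p (l'.val + 1) 1 : ℤ) : ℚ) else 0)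
            + ∑ m ∈ range (s (l'.val + 1)), ((p (l'.val + 1) (m + 2) : ℤ) : ℚ) *
              (if m = (j : ℕ) then -((k (l'.val + 1) (m + 1) : ℤ) : ℚ)
               else if m + 1 = (j : ℕ) ∨ (j : ℕ) + 1 = m then 1 else 0))
          * ∏ l'' ∈ (Finset.Icc 1 ν).erase (l'.val + 1), ((p l'' 1 : ℤ) : ℚ) := by
          by_cases hz : (j : ℕ) = 0 <;> simp [hz] <;> ring
      _ = 0 := by rw [key]; ring

lemma dot_vK (ν : ℕ) (s : ℕ → ℕ)
    (hs : ∀ l, 1 ≤ l → l ≤ ν → 1 ≤ s l)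
    (e₀ : ℤ) (k : ℕ → ℕ → ℤ) (p : ℕ → ℕ → ℤ)
    (hp2 : ∀ l, 1 ≤ l → l ≤ ν → p l (s l + 2) = 0)
    (hp1 : ∀ l, 1 ≤ l → l ≤ ν → p l (s l + 1) = 1)
    (hrec : ∀ l i, 1 ≤ l → l ≤ ν → 1 ≤ i → i ≤ s l →
      p l i = k l i * p l (i + 1) - p l (i + 2)) :
    ∑ v, uFun ν s p v * plumbVK ν s e₀ k v
      = -((e₀ : ℚ) + 2) * ∏ l ∈ Finset.Icc 1 ν, (p l 1 : ℚ)
        + ∑ l ∈ Finset.Icc 1 ν,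
            ((p l 1 : ℚ) - (p l 2 : ℚ) - 1) * ∏ l' ∈ (Finset.Icc 1 ν).erase l, (p l' 1 : ℚ) := by
  classical
  rw [sum_plumbV]
  have hin : ∀ l : Fin ν, ∑ i : Fin (s (l.val + 1)),
      uFun ν s p (some ⟨l, i⟩) * plumbVK ν s e₀ k (some ⟨l, i⟩)
      = ((p (l.val + 1) 1 : ℚ) - (p (l.val + 1) 2 : ℚ) - 1)
          * ∏ l' ∈ (Finset.Icc 1 ν).erase (l.val + 1), ((p l' 1 : ℤ) : ℚ) := by
    intro l
    have hL1 : 1 ≤ l.val + 1 := by omega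
    have hL2 : l.val + 1 ≤ ν := by have := l.isLt; omega
    have hcongr : ∀ i : Fin (s (l.val + 1)),
        uFun ν s p (some ⟨l, i⟩) * plumbVK ν s e₀ k (some ⟨l, i⟩)
        = (fun m => ((p (l.val + 1) (m + 2) : ℤ) : ℚ) * (((k (l.val + 1) (m + 1) : ℤ) : ℚ) - 2)
            * ∏ l' ∈ (Finset.Icc 1 ν).erase (l.val + 1), ((p l' 1 : ℤ) : ℚ)) i.val := by
      intro i
      rw [uFun_some]
      show _ * (((k (l.val + 1) (i.val + 1) : ℤ) : ℚ) - 2) = _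
      ring
    have hsum : (∑ i : Fin (s (l.val + 1)),
        uFun ν s p (some ⟨l, i⟩) * plumbVK ν s e₀ k (some ⟨l, i⟩))
        = ∑ m ∈ range (s (l.val + 1)),
            ((p (l.val + 1) (m + 2) : ℤ) : ℚ) * (((k (l.val + 1) (m + 1) : ℤ) : ℚ) - 2)
            * ∏ l' ∈ (Finset.Icc 1 ν).erase (l.val + 1), ((p l' 1 : ℤ) : ℚ) := by
      rw [Finset.sum_congr rfl (fun i _ => hcongr i)]
      exact Fin.sum_univ_eq_sum_range
        (fun m => ((p (l.val + 1) (m + 2) : ℤ) : ℚ) * (((k (l.val + 1) (m + 1) : ℤ) : ℚ) - 2)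
            * ∏ l' ∈ (Finset.Icc 1 ν).erase (l.val + 1), ((p l' 1 : ℤ) : ℚ)) (s (l.val + 1))
    rw [hsum, ← Finset.sum_mul,
      teleQ (s (l.val + 1)) (p (l.val + 1)) (k (l.val + 1)) (hp1 _ hL1 hL2) (hp2 _ hL1 hL2)
        (fun m hm1 hm2 => hrec _ m hL1 hL2 hm1 hm2)]
  rw [Finset.sum_congr rfl (fun l _ => hin l)]
  rw [sumIcc ν (fun L => ((p L 1 : ℚ) - (p L 2 : ℚ) - 1)
      * ∏ l' ∈ (Finset.Icc 1 ν).erase L, ((p l' 1 : ℤ) : ℚ))]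
  show (∏ l ∈ Finset.Icc 1 ν, ((p l 1 : ℤ) : ℚ)) * (-(e₀ : ℚ) - 2) + _ = _
  ring


/-- If `D = e₀ p₁⋯p_ν + ∑_l q_l ∏_{l'≠l} p_{l'} ≠ 0` (so `Q` is
invertible over `ℚ`) and `w = Q⁻¹ v^K` (equivalently, `Q w = v^K`), then
`D * w(c) = -(e₀+2) p₁⋯p_ν + ∑_l (p_l - q_l - 1) ∏_{l'≠l} p_{l'}`; in the paper's
notation `w(c) = m_{v_c}(K)` and this identity is equivalent to
`m_{v_c}(K) = -N_Y - 1`. -/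
theorem stmt_5 (ν : ℕ) (hν : 1 ≤ ν) (s : ℕ → ℕ)
    (hs : ∀ l, 1 ≤ l → l ≤ ν → 1 ≤ s l)
    (e₀ : ℤ) (k : ℕ → ℕ → ℤ)
    (hk : ∀ l i, 1 ≤ l → l ≤ ν → 1 ≤ i → i ≤ s l → 2 ≤ k l i)
    (p : ℕ → ℕ → ℤ)
    (hp2 : ∀ l, 1 ≤ l → l ≤ ν → p l (s l + 2) = 0)
    (hp1 : ∀ l, 1 ≤ l → l ≤ ν → p l (s l + 1) = 1)
    (hrec : ∀ l i, 1 ≤ l → l ≤ ν → 1 ≤ i → i ≤ s l →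
      p l i = k l i * p l (i + 1) - p l (i + 2))
    (hD : e₀ * ∏ l ∈ Finset.Icc 1 ν, p l 1
        + ∑ l ∈ Finset.Icc 1 ν, p l 2 * ∏ l' ∈ (Finset.Icc 1 ν).erase l, p l' 1 ≠ 0)
    (w : PlumbV ν s → ℚ)
    (hw : ((plumbQ ν s e₀ k).map (fun z : ℤ => (z : ℚ))).mulVec w = plumbVK ν s e₀ k) :
    ((e₀ * ∏ l ∈ Finset.Icc 1 ν, p l 1
        + ∑ l ∈ Finset.Icc 1 ν, p l 2 * ∏ l' ∈ (Finset.Icc 1 ν).erase l, p l' 1 : ℤ) : ℚ)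
      * w none
    = -((e₀ : ℚ) + 2) * ∏ l ∈ Finset.Icc 1 ν, (p l 1 : ℚ)
      + ∑ l ∈ Finset.Icc 1 ν,
          ((p l 1 : ℚ) - (p l 2 : ℚ) - 1) * ∏ l' ∈ (Finset.Icc 1 ν).erase l, (p l' 1 : ℚ) := by
  classical
  have h2 : Matrix.vecMul (uFun ν s p) ((plumbQ ν s e₀ k).map (fun z : ℤ => (z : ℚ)))
      = fun v' => if v' = none then
          ((e₀ * ∏ l ∈ Finset.Icc 1 ν, p l 1
            + ∑ l ∈ Finset.Icc 1 ν, p l 2 * ∏ l' ∈ (Finset.Icc 1 ν).erase l, p l' 1 : ℤ) : ℚ)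
        else 0 := by
    funext v'
    exact row_eq ν s hs e₀ k p hp2 hp1 hrec v'
  have h1 : ((e₀ * ∏ l ∈ Finset.Icc 1 ν, p l 1
        + ∑ l ∈ Finset.Icc 1 ν, p l 2 * ∏ l' ∈ (Finset.Icc 1 ν).erase l, p l' 1 : ℤ) : ℚ)
      * w none
      = dotProduct
          (Matrix.vecMul (uFun ν s p) ((plumbQ ν s e₀ k).map (fun z : ℤ => (z : ℚ)))) w := by
    rw [h2, dotProduct]
    rw [Fintype.sum_option]
    simp
  rw [h1, ← Matrix.dotProduct_mulVec, hw]
  exact dot_vK ν s hs e₀ k p hp2 hp1 hrec
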